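/- Let c ∈ ℝ and R > 0 satisfy |a_l − c| < R for all l ∈ {1, …, m}, and define Q(x) = (1/(√(2π)·2πi)) · ∮_{|t − c| = R} exp(−(t−x)²/2) · ∏_{l=1}^m (t − a_l)^{−n_l} dt (counterclockwise circle integral). Then for every integer j with 0 ≤ j ≤ |n| − 2 one has ∫_{x∈ℝ} x^j · Q(x) dx = 0, and ∫_{x∈ℝ} x^{|n|−1} · Q(x) dx = 1. -/

import Mathlib

/-
Integrating `x ^ j` against the Gaussian kernel gives
`∫ x ^ j * exp (-(t - x) ^ 2 / 2) dx = √(2π) * q_j(t)`, where `q_j` is monic of degree `j`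
(integration by parts yields `q_{j+1} = X * q_j + j * q_{j-1}`). Exchanging the two integrals,
`∫ x ^ j * Q(x) dx = (2πi)⁻¹ ∮ q_j / A` with `A = ∏ (t - a_l) ^ n_l`. All zeros of `A` lie inside
the circle, so the circle can be pushed to infinity, where `q_j / A` is `α / t + O(t⁻²)` with
`α` the coefficient of `t ^ (|n| - 1)` in `q_j`. Hence the contour integral is `2πi α`, which is
`0` for `j ≤ |n| - 2` and `1` for `j = |n| - 1`.
-/

open MeasureTheory Finset

/-- The multiple Hermite linear form of type I (integral representation),
with contour a counterclockwise circle of center `c` and radius `R`. -/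
noncomputable def mhQ {m : ℕ} (a : Fin m → ℝ) (c R : ℝ) (ν : Fin m → ℕ) (y : ℝ) : ℂ :=
  ((Real.sqrt (2 * Real.pi) : ℂ) * (2 * Real.pi * Complex.I))⁻¹ *
    ∮ t in C((c : ℂ), R),
      Complex.exp (-(t - (y : ℂ)) ^ 2 / 2) * ∏ l, (t - (a l : ℂ)) ^ (-(ν l : ℤ))

open Polynomial Metric Filter Topology Bornology Asymptotics

theorem integrable_pow_mul_exp_neg_mul_sq {b : ℝ} (hb : 0 < b) (j : ℕ) :
    Integrable fun x : ℝ => x ^ j * Real.exp (-b * x ^ 2) := by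
  simpa only [Real.rpow_natCast] using
    integrable_rpow_mul_exp_neg_mul_sq hb (s := j) (by linarith [j.cast_nonneg (α := ℝ)])

theorem norm_cexp_neg_sq_sub_div_two_le (t : ℂ) (x : ℝ) :
    ‖Complex.exp (-(t - x) ^ 2 / 2)‖ ≤ Real.exp (‖t‖ ^ 2 / 2) * Real.exp (-(1 / 4) * x ^ 2) := by
  rw [Complex.norm_exp, ← Real.exp_add, Real.exp_le_exp, Complex.sq_norm, Complex.normSq_apply]
  simp only [Complex.div_re, Complex.neg_re, pow_two, Complex.mul_re,
    Complex.sub_re, Complex.sub_im, Complex.ofReal_re, Complex.ofReal_im, Complex.re_ofNat,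
    Complex.im_ofNat, Complex.normSq_ofNat]
  nlinarith [sq_nonneg (x - 2 * t.re)]

theorem norm_pow_mul_cexp_neg_sq_sub_div_two_le (j : ℕ) (t : ℂ) (x : ℝ) :
    ‖(x : ℂ) ^ j * Complex.exp (-(t - x) ^ 2 / 2)‖ ≤
      Real.exp (‖t‖ ^ 2 / 2) * ‖x ^ j * Real.exp (-(1 / 4) * x ^ 2)‖ := by
  rw [norm_mul, norm_mul, norm_pow, norm_pow, Complex.norm_real,
    Real.norm_of_nonneg (Real.exp_pos _).le, mul_left_comm]
  gcongr
  exact norm_cexp_neg_sq_sub_div_two_le t x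

theorem integrable_pow_mul_cexp_neg_sq_sub_div_two (j : ℕ) (t : ℂ) :
    Integrable fun x : ℝ => (x : ℂ) ^ j * Complex.exp (-(t - x) ^ 2 / 2) :=
  (((integrable_pow_mul_exp_neg_mul_sq (by norm_num) j).norm.const_mul _)).mono'
    (by fun_prop) (.of_forall (norm_pow_mul_cexp_neg_sq_sub_div_two_le j t))

theorem integral_cexp_neg_sq_sub_div_two (t : ℂ) :
    ∫ x : ℝ, Complex.exp (-(t - x) ^ 2 / 2) = Real.sqrt (2 * Real.pi) := by
  have h : ∀ x : ℝ, -(t - x) ^ 2 / 2 = -(1 / 2) * (x : ℂ) ^ 2 + t * x + -t ^ 2 / 2 := by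
    intro x; ring
  simp_rw [h]
  rw [integral_cexp_quadratic (by norm_num), Real.sqrt_eq_rpow, Complex.ofReal_cpow (by positivity)]
  push_cast
  ring_nf
  simp

theorem hasDerivAt_cexp_neg_sq_sub_div_two (t : ℂ) (x : ℝ) :
    HasDerivAt (fun x : ℝ => Complex.exp (-(t - x) ^ 2 / 2))
      ((t - x) * Complex.exp (-(t - x) ^ 2 / 2)) x := by
  have h : HasDerivAt (fun w : ℂ => -(t - w) ^ 2 / 2) (t - x) x := by
    simpa using (((hasDerivAt_id (x : ℂ)).const_sub t).pow 2).neg.div_const 2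
  simpa [mul_comm] using h.cexp.comp_ofReal

-- For `j = 0` the last term vanishes, whatever the truncated `j - 1` is.
theorem integral_pow_succ_mul_cexp_neg_sq_sub_div_two (j : ℕ) (t : ℂ) :
    ∫ x : ℝ, (x : ℂ) ^ (j + 1) * Complex.exp (-(t - x) ^ 2 / 2) =
      t * (∫ x : ℝ, (x : ℂ) ^ j * Complex.exp (-(t - x) ^ 2 / 2)) +
        j * ∫ x : ℝ, (x : ℂ) ^ (j - 1) * Complex.exp (-(t - x) ^ 2 / 2) := by
  have hI := integrable_pow_mul_cexp_neg_sq_sub_div_two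
  have hI' : Integrable fun x : ℝ => (x : ℂ) ^ j * ((t - x) * Complex.exp (-(t - x) ^ 2 / 2)) :=
    ((hI j t).const_mul t).sub (hI (j + 1) t) |>.congr <| .of_forall fun x => by
      simp only [Pi.sub_apply, pow_succ]; ring
  have ibp := integral_mul_deriv_eq_deriv_mul_of_integrable
    (u := fun x : ℝ => (x : ℂ) ^ j) (u' := fun x : ℝ => j * (x : ℂ) ^ (j - 1))
    (fun x _ => (hasDerivAt_pow j (x : ℂ)).comp_ofReal)
    (fun x _ => hasDerivAt_cexp_neg_sq_sub_div_two t x) hI'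
    (((hI (j - 1) t).const_mul (j : ℂ)).congr <| .of_forall fun x => by
      simp only [Pi.mul_apply]; ring)
    (hI j t)
  calc ∫ x : ℝ, (x : ℂ) ^ (j + 1) * Complex.exp (-(t - x) ^ 2 / 2)
      = ∫ x : ℝ, (t * ((x : ℂ) ^ j * Complex.exp (-(t - x) ^ 2 / 2)) -
          (x : ℂ) ^ j * ((t - x) * Complex.exp (-(t - x) ^ 2 / 2))) := by
        congr 1 with x; ring
    _ = t * (∫ x : ℝ, (x : ℂ) ^ j * Complex.exp (-(t - x) ^ 2 / 2)) +
        j * ∫ x : ℝ, (x : ℂ) ^ (j - 1) * Complex.exp (-(t - x) ^ 2 / 2) := by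
        rw [integral_sub ((hI j t).const_mul t) hI', integral_const_mul, ibp, sub_neg_eq_add]
        simp only [mul_assoc, integral_const_mul]

noncomputable def gaussianMomentPoly : ℕ → ℂ[X]
  | 0 => 1
  | 1 => X
  | j + 2 => X * gaussianMomentPoly (j + 1) + ((j + 1 : ℕ) : ℂ) • gaussianMomentPoly j

theorem degree_gaussianMomentPoly (j : ℕ) : (gaussianMomentPoly j).degree = j := by
  induction j using Nat.twoStepInduction with
  | zero => simp [gaussianMomentPoly]
  | one => simp [gaussianMomentPoly]
  | more j ih₀ ih₁ =>
    have hX : (X * gaussianMomentPoly (j + 1)).degree = ((j + 2 : ℕ) : WithBot ℕ) := by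
      rw [degree_mul, degree_X, ih₁]; norm_cast; omega
    have hlt : (((j + 1 : ℕ) : ℂ) • gaussianMomentPoly j).degree < ((j + 2 : ℕ) : WithBot ℕ) :=
      (degree_smul_le _ _).trans_lt (by rw [ih₀]; exact_mod_cast (by omega : j < j + 2))
    rw [gaussianMomentPoly.eq_3, degree_add_eq_left_of_degree_lt (hX ▸ hlt), hX]

theorem natDegree_gaussianMomentPoly (j : ℕ) : (gaussianMomentPoly j).natDegree = j :=
  natDegree_eq_of_degree_eq_some (degree_gaussianMomentPoly j)

theorem monic_gaussianMomentPoly (j : ℕ) : (gaussianMomentPoly j).Monic := by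
  induction j using Nat.twoStepInduction with
  | zero => exact monic_one
  | one => exact monic_X
  | more j _ ih₁ =>
    refine (monic_X.mul ih₁).add_of_left ((degree_smul_le _ _).trans_lt ?_)
    rw [degree_mul, degree_X, degree_gaussianMomentPoly, degree_gaussianMomentPoly]
    norm_cast; omega

theorem integral_pow_mul_cexp_neg_sq_sub_div_two (j : ℕ) (t : ℂ) :
    ∫ x : ℝ, (x : ℂ) ^ j * Complex.exp (-(t - x) ^ 2 / 2) =
      Real.sqrt (2 * Real.pi) * (gaussianMomentPoly j).eval t := by
  induction j using Nat.twoStepInduction with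
  | zero => simp [gaussianMomentPoly, integral_cexp_neg_sq_sub_div_two]
  | one =>
    have h := integral_pow_succ_mul_cexp_neg_sq_sub_div_two 0 t
    simp only [zero_add, pow_zero, one_mul, CharP.cast_eq_zero, zero_mul, add_zero] at h
    rw [h, integral_cexp_neg_sq_sub_div_two, gaussianMomentPoly, eval_X, mul_comm]
  | more j ih₀ ih₁ =>
    rw [integral_pow_succ_mul_cexp_neg_sq_sub_div_two, Nat.add_sub_cancel, ih₁, ih₀,
      gaussianMomentPoly.eq_3]
    simp only [eval_add, eval_mul, eval_X, eval_smul, smul_eq_mul]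
    ring

theorem circleIntegral_eq_zero_of_isBoundedUnder {E : Type*} [NormedAddCommGroup E]
    [NormedSpace ℂ E] [CompleteSpace E] {c : ℂ} {R : ℝ} (hR : 0 < R) {f : ℂ → E}
    (hf : ∀ z ∉ ball c R, DifferentiableAt ℂ f z)
    (hdecay : IsBoundedUnder (· ≤ ·) (cobounded ℂ) fun z => ‖z‖ ^ 2 * ‖f z‖) :
    ∮ z in C(c, R), f z = 0 := by
  obtain ⟨C, hC⟩ := hdecay
  obtain ⟨r, -, hr⟩ := hasBasis_cobounded_norm.eventually_iff.1 (eventually_map.1 hC)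
  have hconst : ∀ R' ≥ R, ∮ z in C(c, R'), f z = ∮ z in C(c, R), f z := fun R' hR' =>
    Complex.circleIntegral_eq_of_differentiable_on_annulus_off_countable hR hR'
      Set.countable_empty
      (fun z hz => (hf z hz.2).continuousAt.continuousWithinAt)
      (fun z hz => hf z fun h => hz.1.2 (ball_subset_closedBall h))
  have hsmall : ∀ᶠ R' in atTop, ‖∮ z in C(c, R), f z‖ ≤ 8 * Real.pi * C / R' := by
    filter_upwards [eventually_ge_atTop R, eventually_ge_atTop (2 * ‖c‖),
      eventually_ge_atTop (2 * r), eventually_gt_atTop 0] with R' hRR' hc hr' hR'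
    have hbound : ∀ z ∈ sphere c R', ‖f z‖ ≤ 4 * C / R' ^ 2 := fun z hz => by
      have hz : R' / 2 ≤ ‖z‖ := by
        have := norm_sub_le z c
        rw [mem_sphere_iff_norm.1 hz] at this
        linarith
      have hz0 : 0 < ‖z‖ ^ 2 := pow_pos (by linarith) 2
      have hfz : ‖z‖ ^ 2 * ‖f z‖ ≤ C := hr (show r ≤ ‖z‖ by linarith)
      calc ‖f z‖ ≤ C / ‖z‖ ^ 2 := by rw [le_div_iff₀ hz0, mul_comm]; exact hfz
        _ ≤ C / (R' / 2) ^ 2 := by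
          have hC0 : 0 ≤ C := (mul_nonneg hz0.le (norm_nonneg _)).trans hfz
          gcongr
        _ = 4 * C / R' ^ 2 := by ring
    calc ‖∮ z in C(c, R), f z‖ = ‖∮ z in C(c, R'), f z‖ := by rw [hconst R' hRR']
      _ ≤ 2 * Real.pi * R' * (4 * C / R' ^ 2) :=
        circleIntegral.norm_integral_le_of_norm_le_const hR'.le hbound
      _ = 8 * Real.pi * C / R' := by field_simp; ring
  exact norm_le_zero_iff.1 (ge_of_tendsto (tendsto_const_nhds.div_atTop tendsto_id) hsmall)

theorem circleIntegral_eval_div_eval_eq_zero {c : ℂ} {R : ℝ} (hR : 0 < R) {p q : ℂ[X]}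
    (hq : ∀ z ∉ ball c R, q.eval z ≠ 0) (hpq : p.natDegree + 2 ≤ q.natDegree) :
    ∮ z in C(c, R), p.eval z / q.eval z = 0 := by
  refine circleIntegral_eq_zero_of_isBoundedUnder hR
    (fun z hz => p.differentiableAt.div q.differentiableAt (hq z hz)) ?_
  have hq0 : q ≠ 0 := fun h => hq (c + R) (by simp [abs_of_pos hR]) (by simp [h])
  have hdeg : (X ^ 2 * p).degree ≤ q.degree := by
    rw [degree_eq_natDegree hq0]
    refine degree_le_of_natDegree_le ((natDegree_mul_le).trans ?_)
    rw [natDegree_X_pow]; omega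
  convert div_isBoundedUnder_of_isBigO (isBigO_cobounded_of_degree_le hdeg) using 2 with z
  simp [mul_div_assoc]

theorem circleIntegral_eval_div_eval_eq_coeff {c : ℂ} {R : ℝ} (hR : 0 < R) {p q : ℂ[X]}
    (hq : q.Monic) (hroots : ∀ z ∉ ball c R, q.eval z ≠ 0) (hpq : p.natDegree < q.natDegree) :
    ∮ z in C(c, R), p.eval z / q.eval z =
      2 * Real.pi * Complex.I * p.coeff (q.natDegree - 1) := by
  set N := q.natDegree
  set α := p.coeff (N - 1)
  have hsub : ∀ z ∉ ball c R, z - c ≠ 0 := fun z hz h => hz (by simp [sub_eq_zero.1 h, hR])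
  -- removing the term `α / (z - c)` leaves a remainder of order `z⁻²`, whose integral vanishes
  set r := p * (X - C c) - C α * q
  have hr : r.natDegree + 2 ≤ (q * (X - C c)).natDegree := by
    rw [hq.natDegree_mul (monic_X_sub_C c), natDegree_X_sub_C]
    suffices r.natDegree ≤ N - 1 by omega
    refine natDegree_le_iff_coeff_eq_zero.2 fun i hi => ?_
    obtain ⟨k, rfl⟩ : ∃ k, i = k + 1 := ⟨i - 1, by omega⟩
    rw [coeff_sub, coeff_mul_X_sub_C, coeff_C_mul,
      coeff_eq_zero_of_natDegree_lt (by omega : p.natDegree < k + 1)]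
    rcases (show k = N - 1 ∨ N < k + 1 by omega) with rfl | hk
    · rw [Nat.sub_add_cancel (by omega), show q.coeff N = 1 from hq.coeff_natDegree]; ring
    · rw [coeff_eq_zero_of_natDegree_lt (by omega : p.natDegree < k),
        coeff_eq_zero_of_natDegree_lt hk]; ring
  have hD : ∀ z ∉ ball c R, (q * (X - C c)).eval z ≠ 0 := fun z hz => by
    simpa using mul_ne_zero (hroots z hz) (hsub z hz)
  have hsphere : ∀ z ∈ sphere c R, z ∉ ball c R := fun z hz => by simp [mem_sphere.1 hz]
  have hsplit : Set.EqOn (fun z => p.eval z / q.eval z)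
      (fun z => α * (z - c)⁻¹ + r.eval z / (q * (X - C c)).eval z) (sphere c R) := by
    intro z hz
    have := hroots z (hsphere z hz)
    have := hsub z (hsphere z hz)
    simp only [r, eval_sub, eval_mul, eval_X, eval_C]
    field_simp
    ring
  rw [circleIntegral.integral_congr hR.le hsplit, circleIntegral.integral_add,
    circleIntegral.integral_const_mul,
    circleIntegral.integral_sub_inv_of_mem_ball (mem_ball_self hR),
    circleIntegral_eval_div_eval_eq_zero hR hD hr, add_zero]
  · ring
  · refine ContinuousOn.circleIntegrable hR.le fun z hz => ContinuousAt.continuousWithinAt ?_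
    exact continuousAt_const.mul
      ((continuousAt_id.sub continuousAt_const).inv₀ (hsub z (hsphere z hz)))
  · refine ContinuousOn.circleIntegrable hR.le fun z hz => ContinuousAt.continuousWithinAt ?_
    exact r.continuousAt.div (q * (X - C c)).continuousAt (hD z (hsphere z hz))

theorem integral_circleIntegral_comm {E : Type*} [NormedAddCommGroup E] [NormedSpace ℂ E]
    [CompleteSpace E] {c : ℂ} {R : ℝ} (hR : 0 ≤ R) {F : ℂ → ℝ → E} {bound : ℝ → ℝ}
    (hF : ContinuousOn (Function.uncurry F) (sphere c R ×ˢ Set.univ)) (hb : Integrable bound)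
    (hFb : ∀ z ∈ sphere c R, ∀ x, ‖F z x‖ ≤ bound x) :
    ∫ x, (∮ z in C(c, R), F z x) = ∮ z in C(c, R), ∫ x, F z x := by
  simp only [circleIntegral, ← integral_smul]
  refine (intervalIntegral_integral_swap ?_).symm
  have hcont : Continuous fun p : ℝ × ℝ =>
      deriv (circleMap c R) p.1 • F (circleMap c R p.1) p.2 := by
    simp only [deriv_circleMap]
    refine ((continuous_circleMap 0 R).comp continuous_fst).mul continuous_const |>.smul ?_
    exact hF.comp_continuous (f := fun p : ℝ × ℝ => (circleMap c R p.1, p.2)) (by fun_prop)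
      fun p => ⟨circleMap_mem_sphere c hR p.1, trivial⟩
  refine ((integrableOn_const (C := R) measure_Ioc_lt_top.ne).mul_prod hb).mono'
    hcont.aestronglyMeasurable (.of_forall fun p => ?_)
  rw [Function.uncurry_apply_pair, norm_smul, deriv_circleMap, norm_mul, norm_circleMap_zero,
    Complex.norm_I, mul_one, abs_of_nonneg hR]
  exact mul_le_mul_of_nonneg_left (hFb _ (circleMap_mem_sphere c hR p.1) _) hR

noncomputable def nodePoly {m : ℕ} (a : Fin m → ℝ) (n : Fin m → ℕ) : ℂ[X] :=
  ∏ l, (X - C (a l : ℂ)) ^ n l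

section nodePoly

variable {m : ℕ} (a : Fin m → ℝ) (n : Fin m → ℕ)

theorem eval_nodePoly (z : ℂ) : (nodePoly a n).eval z = ∏ l, (z - a l) ^ n l := by
  simp [nodePoly, eval_prod]

theorem monic_nodePoly : (nodePoly a n).Monic :=
  monic_prod_of_monic _ _ fun _ _ => (monic_X_sub_C _).pow _

theorem natDegree_nodePoly : (nodePoly a n).natDegree = ∑ l, n l := by
  rw [nodePoly, natDegree_prod_of_monic _ _ fun _ _ => (monic_X_sub_C _).pow _]
  simp

variable {a} {c R : ℝ}

theorem eval_nodePoly_ne_zero (hc : ∀ l, |a l - c| < R) (z : ℂ) (hz : z ∉ ball (c : ℂ) R) :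
    (nodePoly a n).eval z ≠ 0 := by
  rw [eval_nodePoly, prod_ne_zero_iff]
  refine fun l _ => pow_ne_zero _ (sub_ne_zero.2 fun h => hz ?_)
  rw [h, mem_ball, dist_eq_norm, ← Complex.ofReal_sub, Complex.norm_real, Real.norm_eq_abs]
  exact hc l

theorem mhQ_eq_circleIntegral (y : ℝ) :
    mhQ a c R n y = ((Real.sqrt (2 * Real.pi) : ℂ) * (2 * Real.pi * Complex.I))⁻¹ *
      ∮ t in C((c : ℂ), R), Complex.exp (-(t - y) ^ 2 / 2) / (nodePoly a n).eval t := by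
  simp only [mhQ, eval_nodePoly, div_eq_mul_inv, ← prod_inv_distrib, zpow_neg, zpow_natCast]

theorem integral_pow_mul_mhQ (hR : 0 < R) (hc : ∀ l, |a l - c| < R) (j : ℕ) :
    ∫ x : ℝ, (x : ℂ) ^ j * mhQ a c R n x = (2 * Real.pi * Complex.I)⁻¹ *
      ∮ t in C((c : ℂ), R), (gaussianMomentPoly j).eval t / (nodePoly a n).eval t := by
  set F : ℂ → ℝ → ℂ := fun t x =>
    (x : ℂ) ^ j * Complex.exp (-(t - x) ^ 2 / 2) / (nodePoly a n).eval t
  have hP : ∀ t ∈ sphere (c : ℂ) R, (nodePoly a n).eval t ≠ 0 := fun t ht =>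
    eval_nodePoly_ne_zero n hc t (by simp [mem_sphere.1 ht])
  obtain ⟨M, hM⟩ : ∃ M, ∀ t ∈ sphere (c : ℂ) R,
      ‖Real.exp (‖t‖ ^ 2 / 2) / ‖(nodePoly a n).eval t‖‖ ≤ M :=
    (isCompact_sphere _ _).exists_bound_of_continuousOn <|
      (by fun_prop : Continuous fun t : ℂ => Real.exp (‖t‖ ^ 2 / 2)).continuousOn.div
        (nodePoly a n).continuous.norm.continuousOn fun t ht => norm_ne_zero_iff.2 (hP t ht)
  have hcont : ContinuousOn (Function.uncurry F) (sphere (c : ℂ) R ×ˢ Set.univ) :=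
    (by fun_prop : Continuous fun p : ℂ × ℝ =>
      (p.2 : ℂ) ^ j * Complex.exp (-(p.1 - p.2) ^ 2 / 2)).continuousOn.div
      ((nodePoly a n).continuous.comp continuous_fst).continuousOn fun p hp => hP p.1 hp.1
  have hbound : ∀ t ∈ sphere (c : ℂ) R, ∀ x : ℝ,
      ‖F t x‖ ≤ M * ‖x ^ j * Real.exp (-(1 / 4) * x ^ 2)‖ := fun t ht x => by
    have hPt := norm_pos_iff.2 (hP t ht)
    have hMt := hM t ht
    rw [Real.norm_of_nonneg (by positivity), div_le_iff₀ hPt] at hMt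
    rw [norm_div, div_le_iff₀ hPt]
    calc _ ≤ Real.exp (‖t‖ ^ 2 / 2) * ‖x ^ j * Real.exp (-(1 / 4) * x ^ 2)‖ :=
          norm_pow_mul_cexp_neg_sq_sub_div_two_le j t x
      _ ≤ M * ‖(nodePoly a n).eval t‖ * ‖x ^ j * Real.exp (-(1 / 4) * x ^ 2)‖ := by gcongr
      _ = _ := by ring
  have hsqrt : (Real.sqrt (2 * Real.pi) : ℂ) ≠ 0 := by
    exact_mod_cast (Real.sqrt_pos.2 Real.two_pi_pos).ne'
  calc ∫ x : ℝ, (x : ℂ) ^ j * mhQ a c R n x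
      = ((Real.sqrt (2 * Real.pi) : ℂ) * (2 * Real.pi * Complex.I))⁻¹ *
          ∫ x : ℝ, ∮ t in C((c : ℂ), R), F t x := by
        rw [← integral_const_mul]
        congr 1 with x
        simp only [F, mhQ_eq_circleIntegral, mul_left_comm _ (_ * _)⁻¹, mul_div_assoc,
          ← circleIntegral.integral_const_mul]
    _ = ((Real.sqrt (2 * Real.pi) : ℂ) * (2 * Real.pi * Complex.I))⁻¹ *
          ∮ t in C((c : ℂ), R), (Real.sqrt (2 * Real.pi) : ℂ) *
          ((gaussianMomentPoly j).eval t / (nodePoly a n).eval t) := by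
        rw [integral_circleIntegral_comm hR.le hcont
          ((integrable_pow_mul_exp_neg_mul_sq (by norm_num) j).norm.const_mul M) hbound]
        simp only [F, integral_div]
        simp only [integral_pow_mul_cexp_neg_sq_sub_div_two, mul_div_assoc]
    _ = (2 * Real.pi * Complex.I)⁻¹ *
          ∮ t in C((c : ℂ), R), (gaussianMomentPoly j).eval t / (nodePoly a n).eval t := by
        rw [circleIntegral.integral_const_mul, mul_inv, mul_comm (_ : ℂ)⁻¹, mul_assoc,
          inv_mul_cancel_left₀ hsqrt]

end nodePoly

theorem integral_pow_mul_mhQ_eq_coeff {m : ℕ} {a : Fin m → ℝ} (n : Fin m → ℕ) {c R : ℝ}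
    (hR : 0 < R) (hc : ∀ l, |a l - c| < R) {j : ℕ} (hj : j < ∑ k, n k) :
    ∫ x : ℝ, (x : ℂ) ^ j * mhQ a c R n x = (gaussianMomentPoly j).coeff (∑ k, n k - 1) := by
  rw [integral_pow_mul_mhQ n hR hc, circleIntegral_eval_div_eval_eq_coeff hR (monic_nodePoly a n)
    (eval_nodePoly_ne_zero n hc) (by rwa [natDegree_gaussianMomentPoly, natDegree_nodePoly]),
    natDegree_nodePoly, ← mul_assoc, inv_mul_cancel₀ (by simp [Real.pi_ne_zero]), one_mul]

theorem stmt_5_general (m : ℕ) (hm : 1 ≤ m) (a : Fin m → ℝ)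
    (n : Fin m → ℕ) (hn : ∀ k, 1 ≤ n k)
    (c R : ℝ) (hR : 0 < R) (hc : ∀ l, |a l - c| < R) :
    (∀ j : ℕ, j + 2 ≤ ∑ k, n k →
      ∫ x : ℝ, (x : ℂ) ^ j * mhQ a c R n x = 0) ∧
    ∫ x : ℝ, (x : ℂ) ^ ((∑ k, n k) - 1) * mhQ a c R n x = 1 := by
  have hN : 1 ≤ ∑ k, n k := (hn ⟨0, hm⟩).trans (single_le_sum (by simp) (mem_univ _))
  refine ⟨fun j hj => ?_, ?_⟩
  · rw [integral_pow_mul_mhQ_eq_coeff n hR hc (by omega)]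
    exact coeff_eq_zero_of_natDegree_lt (by rw [natDegree_gaussianMomentPoly]; omega)
  · rw [integral_pow_mul_mhQ_eq_coeff n hR hc (by omega)]
    simpa [natDegree_gaussianMomentPoly] using (monic_gaussianMomentPoly _).coeff_natDegree

theorem stmt_5 (m : ℕ) (hm : 1 ≤ m) (a : Fin m → ℝ) (ha : Function.Injective a)
    (n : Fin m → ℕ) (hn : ∀ k, 1 ≤ n k)
    (c R : ℝ) (hR : 0 < R) (hc : ∀ l, |a l - c| < R) :
    (∀ j : ℕ, j + 2 ≤ ∑ k, n k →
      ∫ x : ℝ, (x : ℂ) ^ j * mhQ a c R n x = 0) ∧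
    ∫ x : ℝ, (x : ℂ) ^ ((∑ k, n k) - 1) * mhQ a c R n x = 1 :=
  stmt_5_general m hm a n hn c R hR hc
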